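/- If X ⊂ P^r is a non-degenerate cone with vertex v, then no proper linear subspace of P^r can be J-tangent to X along a subvariety containing v. -/

import Mathlib

open MvPolynomial Classical

noncomputable section

/-- A subset of affine space is algebraic if it is the zero locus of a set of polynomials. -/
def IsAlg {N : ℕ} (S : Set (Fin N → ℂ)) : Prop :=
  ∃ I : Set (MvPolynomial (Fin N) ℂ), S = {x | ∀ f ∈ I, eval x f = 0}

/-- Zariski closure. -/
def zcl {N : ℕ} (S : Set (Fin N → ℂ)) : Set (Fin N → ℂ) :=
  ⋂₀ {T | IsAlg T ∧ S ⊆ T}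

/-- Affine cones (over projective sets). -/
def IsCone {N : ℕ} (S : Set (Fin N → ℂ)) : Prop :=
  (0 : Fin N → ℂ) ∈ S ∧ ∀ c : ℂ, ∀ x ∈ S, c • x ∈ S

/-- Irreducible algebraic subsets. -/
def IrrAlg {N : ℕ} (S : Set (Fin N → ℂ)) : Prop :=
  IsAlg S ∧ S.Nonempty ∧ ∀ T₁ T₂ : Set (Fin N → ℂ), IsAlg T₁ → IsAlg T₂ →
    S ⊆ T₁ ∪ T₂ → (S ⊆ T₁ ∨ S ⊆ T₂)

/-- Non-degenerate: the cone spans the ambient space. -/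
def Nondeg {N : ℕ} (S : Set (Fin N → ℂ)) : Prop :=
  Submodule.span ℂ S = ⊤

/-- Projective dimension of (the projectivization of) a cone `S`,
defined as the Krull dimension of the poset of irreducible algebraic
subcones of `S` different from `{0}`. -/
noncomputable def pdim {N : ℕ} (S : Set (Fin N → ℂ)) : WithBot ℕ∞ :=
  Order.krullDim {T : Set (Fin N → ℂ) // IrrAlg T ∧ IsCone T ∧ T ≠ {0} ∧ T ⊆ S}

/-- Cast a natural number into `WithBot ℕ∞`. -/
def nn (a : ℕ) : WithBot ℕ∞ := ((a : ℕ∞) : WithBot ℕ∞)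

/-- Join of two cones. -/
def joinSet {N : ℕ} (S T : Set (Fin N → ℂ)) : Set (Fin N → ℂ) :=
  zcl {x | ∃ u ∈ S, ∃ v ∈ T, x = u + v}

/-- `secant k S` is (the cone over) the `k`-secant variety `S^k(X) = J(X^{k+1})`. -/
def secant {N : ℕ} : ℕ → Set (Fin N → ℂ) → Set (Fin N → ℂ)
  | 0, S => zcl S
  | (k+1), S => joinSet (secant k S) S

/-- Join of a finite family of cones. -/
def joinFam {N m : ℕ} (F : Fin m → Set (Fin N → ℂ)) : Set (Fin N → ℂ) :=
  zcl {x | ∃ q : Fin m → Fin N → ℂ, (∀ i, q i ∈ F i) ∧ x = ∑ i, q i}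

/-- Irreducible components. -/
def IsComponent {N : ℕ} (S T : Set (Fin N → ℂ)) : Prop :=
  IrrAlg T ∧ T ⊆ S ∧ ∀ T', IrrAlg T' → T' ⊆ S → T ⊆ T' → T = T'

/-- Union of the irreducible components of `S` through `x`. -/
def compThrough {N : ℕ} (S : Set (Fin N → ℂ)) (x : Fin N → ℂ) : Set (Fin N → ℂ) :=
  ⋃₀ {T | IsComponent S T ∧ x ∈ T}

/-- Pure (equidimensional) sets. -/
def IsPure {N : ℕ} (S : Set (Fin N → ℂ)) : Prop :=
  ∀ T T', IsComponent S T → IsComponent S T' → pdim T = pdim T'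

/-- Secant variety in the convention for possibly reducible varieties:
union of the joins of `k+1` distinct irreducible components (and the usual
secant variety in the irreducible case). -/
def SecantD {N : ℕ} (k : ℕ) (Y : Set (Fin N → ℂ)) : Set (Fin N → ℂ) :=
  (⋃₀ {J | ∃ T : Fin (k+1) → Set (Fin N → ℂ),
      (∀ i, IsComponent Y (T i)) ∧ Function.Injective T ∧ J = joinFam T})
  ∪ {x | IrrAlg Y ∧ x ∈ secant k Y}

/-- The (cone over the) embedded tangent space at `x`: directions annihilated by the
differentials at `x` of all polynomials vanishing on `S`. -/
def embTangent {N : ℕ} (S : Set (Fin N → ℂ)) (x : Fin N → ℂ) : Set (Fin N → ℂ) :=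
  {v | ∀ f : MvPolynomial (Fin N) ℂ, (∀ y ∈ S, eval y f = 0) →
      ∑ i, v i * eval x (pderiv i f) = 0}

def tanSpan {N : ℕ} (S : Set (Fin N → ℂ)) (x : Fin N → ℂ) : Submodule ℂ (Fin N → ℂ) :=
  Submodule.span ℂ (embTangent S x)

/-- `x` is a smooth point of the `n`-dimensional projective variety with cone `S`. -/
def IsSmoothAt {N : ℕ} (S : Set (Fin N → ℂ)) (n : ℕ) (x : Fin N → ℂ) : Prop :=
  Module.finrank ℂ (tanSpan S x) = n + 1

/-- Algebraic subsets of tuple spaces. -/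
def IsAlgT {N m : ℕ} (S : Set (Fin m → Fin N → ℂ)) : Prop :=
  ∃ I : Set (MvPolynomial (Fin m × Fin N) ℂ),
    S = {q | ∀ f ∈ I, eval (fun p => q p.1 p.2) f = 0}

/-- `P` holds for general (tuples of) points of `X`. -/
def Generically {N : ℕ} (m : ℕ) (X : Set (Fin N → ℂ))
    (P : (Fin m → Fin N → ℂ) → Prop) : Prop :=
  ∃ B : Set (Fin m → Fin N → ℂ), IsAlgT B ∧ ¬ ({q | ∀ i, q i ∈ X} ⊆ B) ∧
    ∀ q : Fin m → Fin N → ℂ, (∀ i, q i ∈ X ∧ q i ≠ 0) → q ∉ B → P q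

/-- `P` holds for general points of the set `S`. -/
def GenericallyOn {N : ℕ} (S : Set (Fin N → ℂ)) (P : (Fin N → ℂ) → Prop) : Prop :=
  ∃ B : Set (Fin N → ℂ), IsAlg B ∧ ¬ (S ⊆ B) ∧ ∀ x ∈ S, x ∉ B → x ≠ 0 → P x

/-- `L` is `J_k`-tangent to `X` along `Y`: for every analytic arc of a point of `X`
and `s ≤ k` points of `Y`, linearly independent off `0`, with the `X`-point off `L`
for `t ≠ 0` and on `L` at `t = 0`, the flat limit of the spanned `s`-space
(described through analytic selections of vectors) lies in `L`. -/
def JkTangent {N : ℕ} (k : ℕ) (X Y : Set (Fin N → ℂ))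
    (L : Submodule ℂ (Fin N → ℂ)) : Prop :=
  ∀ s : ℕ, 1 ≤ s → s ≤ k → ∀ q : Fin (s+1) → ℂ → (Fin N → ℂ), ∀ ε : ℝ, 0 < ε →
    (∀ i, AnalyticOnNhd ℂ (q i) (Metric.ball 0 ε)) →
    (∀ t ∈ Metric.ball (0:ℂ) ε, q 0 t ∈ X) →
    (∀ i : Fin (s+1), i ≠ 0 → ∀ t ∈ Metric.ball (0:ℂ) ε, q i t ∈ Y) →
    (∀ t ∈ Metric.ball (0:ℂ) ε, t ≠ 0 → LinearIndependent ℂ (fun i => q i t)) →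
    (∀ t ∈ Metric.ball (0:ℂ) ε, t ≠ 0 → q 0 t ∉ L) →
    q 0 0 ∈ L →
    ∀ w : ℂ → (Fin N → ℂ), AnalyticOnNhd ℂ w (Metric.ball 0 ε) →
      (∀ t ∈ Metric.ball (0:ℂ) ε, t ≠ 0 →
        w t ∈ Submodule.span ℂ (Set.range (fun i => q i t))) →
      w 0 ∈ L

/-- `X` is `k`-smooth along `Y`: it is smooth along `Y` and any arc-limit
scheme of `m ≤ k+1` points of `X` supported on `Y` spans the right dimension,
i.e. pairwise non-proportional arcs of points stay linearly independent. -/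
def KSmoothAlong {N : ℕ} (k n : ℕ) (X Y : Set (Fin N → ℂ)) : Prop :=
  (∀ y ∈ Y, y ≠ 0 → IsSmoothAt X n y) ∧
  ∀ m : ℕ, 2 ≤ m → m ≤ k + 1 → ∀ q : Fin m → ℂ → (Fin N → ℂ), ∀ ε : ℝ, 0 < ε →
    (∀ i, AnalyticOnNhd ℂ (q i) (Metric.ball 0 ε)) →
    (∀ i, ∀ t ∈ Metric.ball (0:ℂ) ε, q i t ∈ X) →
    (∀ i, q i 0 ∈ Y ∧ q i 0 ≠ 0) →
    (∀ t ∈ Metric.ball (0:ℂ) ε, t ≠ 0 → ∀ i j : Fin m, i ≠ j →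
        ∀ c : ℂ, q i t ≠ c • q j t) →
    ∀ t ∈ Metric.ball (0:ℂ) ε, t ≠ 0 → LinearIndependent ℂ (fun i => q i t)

def KSmooth {N : ℕ} (k n : ℕ) (X : Set (Fin N → ℂ)) : Prop := KSmoothAlong k n X X

/-- The hyperplane with coefficient vector `c`. -/
def hypSub {N : ℕ} (c : Fin N → ℂ) : Submodule ℂ (Fin N → ℂ) :=
  LinearMap.ker (Finset.univ.sum fun i => c i • (LinearMap.proj i : (Fin N → ℂ) →ₗ[ℂ] ℂ))

/-- The hyperplane with coefficients `c` is tangent to `X` at the points `p j`. -/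
def TangentHypAt {N m : ℕ} (X : Set (Fin N → ℂ)) (p : Fin m → Fin N → ℂ)
    (c : Fin N → ℂ) : Prop :=
  c ≠ 0 ∧ ∀ j, embTangent X (p j) ⊆ ↑(hypSub c)

/-- The tangential contact locus `Γ_{p_0,…,p_m}`: union of the irreducible components,
through the points `p j`, of the closure of the locus of smooth points whose tangent
space lies in the span of the tangent spaces at the `p j` (`= T_{S^m(X),x}` by Terracini). -/
def GammaLocus {N m : ℕ} (X : Set (Fin N → ℂ)) (n : ℕ)
    (p : Fin m → Fin N → ℂ) : Set (Fin N → ℂ) :=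
  ⋃₀ {T | IsComponent (zcl {q | q ∈ X ∧ q ≠ 0 ∧ IsSmoothAt X n q ∧
      embTangent X q ⊆ ↑(Submodule.span ℂ (⋃ j, embTangent X (p j)))}) T ∧ ∃ j, p j ∈ T}

/-- The projection contact locus `Ψ_{p_0,…,p_j}`: the component through `p 0` of the
fibre through `p 0` of the tangential projection from `T_{X,p_1,…,p_j}`. -/
def PsiLocus {N j : ℕ} (X : Set (Fin N → ℂ))
    (p : Fin (j+1) → Fin N → ℂ) : Set (Fin N → ℂ) :=
  compThrough (X ∩ ↑(Submodule.span ℂ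
    ((⋃ i : Fin j, embTangent X (p i.succ)) ∪ {p 0}))) (p 0)

/-- `X` is an `R_k`-variety: for `1 ≤ i ≤ k` and general points `p_0,…,p_i`, the
general hyperplane tangent to `X` at these points is `J_i`-tangent to `X` along the
tangential `i`-contact locus. -/
def RkVariety {N : ℕ} (k n : ℕ) (X : Set (Fin N → ℂ)) : Prop :=
  ∀ i : ℕ, 1 ≤ i → i ≤ k →
    Generically (i+1) X fun p =>
      ∃ B : Set (Fin N → ℂ), IsAlg B ∧ ¬ ({c | TangentHypAt X p c} ⊆ B) ∧
        ∀ c, TangentHypAt X p c → c ∉ B → JkTangent i X (GammaLocus X n p) (hypSub c)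

/-- The entry locus of `x` with respect to the `k`-secant variety of `X`. -/
def EntryLocus {N : ℕ} (k : ℕ) (X : Set (Fin N → ℂ)) (x : Fin N → ℂ) :
    Set (Fin N → ℂ) :=
  zcl {z | z ∈ X ∧ z ≠ 0 ∧ ∃ x' ∈ secant (k-1) X, x' ∉ Submodule.span ℂ {z} ∧
      x ∈ Submodule.span ℂ ({z, x'} : Set (Fin N → ℂ))}

/-- `k`-Severi varieties: irreducible, non-degenerate `R_k`-varieties of dimension `n`
with `dim S^k(X) < r` and `dim S^k(X) = (k+2)n/2 + k`. -/
def KSeveri {N : ℕ} (k n : ℕ) (X : Set (Fin N → ℂ)) : Prop :=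
  IrrAlg X ∧ IsCone X ∧ X ≠ {0} ∧ Nondeg X ∧ pdim X = nn n ∧
  RkVariety k n X ∧
  pdim (secant k X) < pdim (Set.univ : Set (Fin N → ℂ)) ∧
  pdim (secant k X) + pdim (secant k X) = nn ((k+2)*n + 2*k)

/-!
Take `x ∈ X` outside `L` (it exists because `X` spans and `L` is proper). Since `v` is a vertex,
the line `v + t x` lies in `X`, so the arc `(v + t x, v)` of `X × Y` leaves `L` for `t ≠ 0` and
meets it at `t = 0`. The lines `⟨v + t x, v⟩ = ⟨v, x⟩` are constant, so their flat limit contains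
`x ∉ L`, and `L` is not `J`-tangent.
-/

open Filter Topology

section PairOffSubmodule

variable {K V : Type*} [Field K] [AddCommGroup V] [Module K V] {L : Submodule K V} {v x : V}

theorem Submodule.add_smul_notMem (hv : v ∈ L) (hx : x ∉ L) {t : K} (ht : t ≠ 0) :
    v + t • x ∉ L := by
  rwa [L.add_mem_iff_right hv, L.smul_mem_iff ht]

theorem linearIndependent_pair_of_mem_of_notMem (hv0 : v ≠ 0) (hv : v ∈ L) (hx : x ∉ L) :
    LinearIndependent K ![v, x] :=
  (LinearIndependent.pair_iff' hv0).2 fun a h => hx (h ▸ L.smul_mem a hv)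

theorem mem_span_pair_add_smul {t : K} (ht : t ≠ 0) :
    x ∈ Submodule.span K (Set.range ![v + t • x, v]) := by
  have h0 : v + t • x ∈ Submodule.span K (Set.range ![v + t • x, v]) :=
    Submodule.subset_span ⟨0, rfl⟩
  have h1 : v ∈ Submodule.span K (Set.range ![v + t • x, v]) := Submodule.subset_span ⟨1, rfl⟩
  have h := Submodule.smul_mem _ t⁻¹ (Submodule.sub_mem _ h0 h1)
  rwa [add_sub_cancel_left, smul_smul, inv_mul_cancel₀ ht, one_smul] at h

end PairOffSubmodule

theorem JkTangent.mem_of_eventually_add_smul_mem {N : ℕ} {X Y : Set (Fin N → ℂ)}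
    {L : Submodule ℂ (Fin N → ℂ)} (hJ : JkTangent 1 X Y L) {v x : Fin N → ℂ}
    (hvY : v ∈ Y) (hvL : v ∈ L) (hv0 : v ≠ 0) (hline : ∀ᶠ t in 𝓝 (0 : ℂ), v + t • x ∈ X) :
    x ∈ L := by
  obtain ⟨ε, hε, hlineε⟩ := Metric.eventually_nhds_iff_ball.1 hline
  by_contra hxL
  have hoff : ∀ t : ℂ, t ≠ 0 → v + t • x ∉ L := fun t ht => L.add_smul_notMem hvL hxL ht
  refine hxL <| hJ 1 le_rfl le_rfl (fun i t => ![v + t • x, v] i) ε hε ?_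
    hlineε ?_ ?_ (fun t _ => hoff t) (by simpa using hvL)
    (fun _ => x) (fun _ _ => analyticAt_const) (fun t _ ht => mem_span_pair_add_smul ht)
  · rw [Fin.forall_fin_two]
    exact ⟨fun _ _ => analyticAt_const.add (analyticAt_id.smul analyticAt_const),
      fun _ _ => analyticAt_const⟩
  · rw [Fin.forall_fin_two]
    exact ⟨fun h => absurd rfl h, fun _ _ _ => hvY⟩
  · intro t _ ht
    exact LinearIndependent.pair_symm_iff.1 <| linearIndependent_pair_of_mem_of_notMem hv0 hvL
      (hoff t ht)

theorem no_Jtangent_along_vertex_general (r : ℕ) (X : Set (Fin (r+1) → ℂ))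
    (hnd : Nondeg X)
    (v : Fin (r+1) → ℂ) (hv0 : v ≠ 0)
    (hvertex : ∀ x ∈ X, ∀ a b : ℂ, a • v + b • x ∈ X)
    (Y : Set (Fin (r+1) → ℂ))
    (hvY : v ∈ Y)
    (L : Submodule ℂ (Fin (r+1) → ℂ)) (hL : L ≠ ⊤) (hYL : Y ⊆ ↑L) :
    ¬ JkTangent 1 X Y L := by
  intro hJ
  obtain ⟨x, hxX, hxL⟩ : ∃ x ∈ X, x ∉ L := by
    by_contra! hXL
    exact hL (eq_top_iff.2 (hnd ▸ Submodule.span_le.2 hXL))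
  refine hxL (hJ.mem_of_eventually_add_smul_mem hvY (hYL hvY) hv0 (.of_forall fun t => ?_))
  simpa using hvertex x hxX 1 t

/-- a non-degenerate cone `X ⊂ ℙ^r` with vertex `v` admits no
proper linear subspace `J`-tangent along a subvariety containing `v`. -/
theorem no_Jtangent_along_vertex (r : ℕ) (X : Set (Fin (r+1) → ℂ))
    (hX : IsAlg X) (hXc : IsCone X) (hXne : X ≠ {0}) (hnd : Nondeg X)
    (v : Fin (r+1) → ℂ) (hv : v ∈ X) (hv0 : v ≠ 0)
    (hvertex : ∀ x ∈ X, ∀ a b : ℂ, a • v + b • x ∈ X)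
    (Y : Set (Fin (r+1) → ℂ)) (hY : IsAlg Y) (hYc : IsCone Y) (hYne : Y ≠ {0})
    (hYX : Y ⊆ X) (hvY : v ∈ Y)
    (L : Submodule ℂ (Fin (r+1) → ℂ)) (hL : L ≠ ⊤) (hYL : Y ⊆ ↑L) :
    ¬ JkTangent 1 X Y L :=
  no_Jtangent_along_vertex_general r X hnd v hv0 hvertex Y hvY L hL hYL
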